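/- Let F be a temporal path with vertices v₀,…,v_{n−1} and let σ_i be the successor map: for ℓ ∈ λ(e_i), with ℓ⁺ = succ(ℓ+1, λ(e_i)) and (for i < n−2) ℓ' = succ(ℓ, λ(e_{i+1})), σ_i(ℓ) = (ℓ⁺, i) if ℓ⁺ ≤ ℓ' (and ℓ⁺ finite when i = n−2), σ_i(ℓ) = (ℓ', i+1) if ℓ' < ℓ⁺, and undefined if both are +∞. Then in the resulting forest 𝓕 whose nodes are pairs (ℓ, i) with ℓ ∈ λ(e_i) and parent map σ, every node has at most 2 children: at most one child of the form (·, i) and at most one of the form (·, i−1). -/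

import Mathlib

/-!
A child `(ℓ, i)` of `(q, j)` has `i = j` or `i + 1 = j`, and its label is recovered from `q`:
if `i = j` then `q` is the strict successor of `ℓ` in `λ(e_j)`, and two labels of `λ(e_j)`
with the same strict successor coincide; if `i + 1 = j` then `q = succ(ℓ, λ(e_j))` lies strictly
below the strict successor of `ℓ` in `λ(e_i)`, so no other label of `λ(e_i)` fits between `ℓ`
and `q`. Hence `(ℓ, i) ↦ i` is injective on the children, with image in `{j, j − 1}`.
-/

/-- Embedding of `ℤ` into `EReal`. -/
def iE (n : ℤ) : EReal := ((n : ℝ) : EReal)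

/-- `succ t X` : the minimum element of `X ⊆ ℤ` that is `≥ t`, or `+∞` if none. -/
noncomputable def eSucc (t : EReal) (X : Set ℤ) : EReal :=
  sInf {y : EReal | ∃ x ∈ X, y = iE x ∧ t ≤ iE x}

/-- The parent map `σ` of the successor forest `𝓕` of a temporal path with `m` edges
`e_0, …, e_{m−1}` labelled by `lam`. `PParent lam m (ℓ, i) (q, j)` holds iff the
node `(q, j)` is `σ_i(ℓ)`: with `ℓ⁺ = succ(ℓ+1, λ(e_i))` and (for `i < m−1`)
`ℓ' = succ(ℓ, λ(e_{i+1}))`, the parent is `(ℓ⁺, i)` if `ℓ⁺ ≤ ℓ'` (or `i = m−1` and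
`ℓ⁺ < +∞`), and `(ℓ', i+1)` if `ℓ' < ℓ⁺`; undefined if both are `+∞`. -/
def PParent (lam : ℕ → Set ℤ) (m : ℕ) (x y : ℤ × ℕ) : Prop :=
  x.1 ∈ lam x.2 ∧ x.2 < m ∧
    ((y.2 = x.2 ∧ y.1 ∈ lam x.2 ∧ iE y.1 = eSucc (iE (x.1 + 1)) (lam x.2) ∧
        (x.2 + 1 = m ∨ iE y.1 ≤ eSucc (iE x.1) (lam (x.2 + 1)))) ∨
      (y.2 = x.2 + 1 ∧ x.2 + 1 < m ∧ y.1 ∈ lam (x.2 + 1) ∧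
        iE y.1 = eSucc (iE x.1) (lam (x.2 + 1)) ∧
        iE y.1 < eSucc (iE (x.1 + 1)) (lam x.2)))

@[simp]
lemma iE_le_iff {a b : ℤ} : iE a ≤ iE b ↔ a ≤ b := by
  simp [iE]

lemma iE_injective : Function.Injective iE := fun _ _ h =>
  le_antisymm (iE_le_iff.1 h.le) (iE_le_iff.1 h.ge)

section eSucc

variable {X Y : Set ℤ} {t q a b : ℤ}

lemma eSucc_le (hb : b ∈ X) (h : t ≤ b) : eSucc (iE t) X ≤ iE b :=
  sInf_le ⟨b, hb, rfl, iE_le_iff.2 h⟩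

lemma eSucc_eq_of_isLeast (h : IsLeast {x | x ∈ X ∧ t ≤ x} q) : eSucc (iE t) X = iE q := by
  refine IsGLB.sInf_eq (IsLeast.isGLB ⟨⟨q, h.1.1, rfl, iE_le_iff.2 h.1.2⟩, ?_⟩)
  rintro _ ⟨x, hx, rfl, hle⟩
  exact iE_le_iff.2 (h.2 ⟨hx, iE_le_iff.1 hle⟩)

lemma eSucc_eq_top (h : ∀ x ∈ X, x < t) : eSucc (iE t) X = ⊤ := by
  refine sInf_eq_top.2 ?_
  rintro _ ⟨x, hx, rfl, hle⟩
  exact absurd (iE_le_iff.1 hle) (h x hx).not_ge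

lemma isLeast_of_eSucc_eq (h : eSucc (iE t) X = iE q) : IsLeast {x | x ∈ X ∧ t ≤ x} q := by
  by_cases hne : ∃ x, x ∈ X ∧ t ≤ x
  · obtain ⟨n, hn, hmin⟩ := Int.exists_least_of_bdd ⟨t, fun _ hz => hz.2⟩ hne
    have hnq : n = q := iE_injective ((eSucc_eq_of_isLeast ⟨hn, hmin⟩).symm.trans h)
    exact hnq ▸ ⟨hn, hmin⟩
  · push Not at hne
    exact absurd (h.symm.trans (eSucc_eq_top hne)) (EReal.coe_ne_top _)

lemma eq_of_eSucc_add_one_eq (ha : a ∈ X) (hb : b ∈ X) (hqa : eSucc (iE (a + 1)) X = iE q)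
    (hqb : eSucc (iE (b + 1)) X = iE q) : a = b := by
  have hla := isLeast_of_eSucc_eq hqa
  have hlb := isLeast_of_eSucc_eq hqb
  rcases lt_trichotomy a b with hab | hab | hab
  · linarith [hla.2 ⟨hb, hab⟩, hlb.1.2]
  · exact hab
  · linarith [hlb.2 ⟨ha, hab⟩, hla.1.2]

lemma not_lt_eSucc_add_one (hab : a < b) (hb : b ∈ X) (hbq : b ≤ q) :
    ¬ iE q < eSucc (iE (a + 1)) X := fun hlt =>
  hlt.not_ge ((eSucc_le hb hab).trans (iE_le_iff.2 hbq))

lemma eq_of_eSucc_eq_of_lt_eSucc_add_one (ha : a ∈ X) (hb : b ∈ X)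
    (hqa : eSucc (iE a) Y = iE q) (hqb : eSucc (iE b) Y = iE q)
    (hlta : iE q < eSucc (iE (a + 1)) X) (hltb : iE q < eSucc (iE (b + 1)) X) : a = b := by
  rcases lt_trichotomy a b with hab | hab | hab
  · exact absurd hlta (not_lt_eSucc_add_one hab hb (isLeast_of_eSucc_eq hqb).1.2)
  · exact hab
  · exact absurd hltb (not_lt_eSucc_add_one hab ha (isLeast_of_eSucc_eq hqa).1.2)

end eSucc

namespace PParent

variable {lam : ℕ → Set ℤ} {m : ℕ} {x y z : ℤ × ℕ}

lemma snd_eq_or_eq_add_one (h : PParent lam m x y) : y.2 = x.2 ∨ y.2 = x.2 + 1 := by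
  rcases h with ⟨-, -, h | h⟩
  exacts [Or.inl h.1, Or.inr h.1]

lemma eq_of_snd_eq (hx : PParent lam m x z) (hy : PParent lam m y z) (hxy : x.2 = y.2) :
    x = y := by
  obtain ⟨a, i⟩ := x
  obtain ⟨b, i'⟩ := y
  obtain rfl : i = i' := hxy
  obtain ⟨ha, -, ⟨hia, -, hqa, -⟩ | ⟨hia, -, -, hqa, hlta⟩⟩ := hx <;>
  obtain ⟨hb, -, ⟨hib, -, hqb, -⟩ | ⟨hib, -, -, hqb, hltb⟩⟩ := hy
  · exact congrArg (·, i) (eq_of_eSucc_add_one_eq ha hb hqa.symm hqb.symm)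
  · simp only at hia hib; omega
  · simp only at hia hib; omega
  · exact congrArg (·, i) (eq_of_eSucc_eq_of_lt_eSucc_add_one ha hb hqa.symm hqb.symm hlta hltb)

end PParent

theorem pParent_at_most_two_children_general (lam : ℕ → Set ℤ) (m : ℕ) (q : ℤ) (j : ℕ) :
    (∀ a b : ℤ × ℕ, PParent lam m a (q, j) → PParent lam m b (q, j) →
        a.2 = b.2 → a = b) ∧
      (∀ a : ℤ × ℕ, PParent lam m a (q, j) → a.2 = j ∨ a.2 + 1 = j) ∧
      {a : ℤ × ℕ | PParent lam m a (q, j)}.encard ≤ 2 := by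
  have level : ∀ a : ℤ × ℕ, PParent lam m a (q, j) → a.2 = j ∨ a.2 + 1 = j := fun a ha =>
    ha.snd_eq_or_eq_add_one.imp Eq.symm Eq.symm
  refine ⟨fun a b ha hb => ha.eq_of_snd_eq hb, level, ?_⟩
  calc {a : ℤ × ℕ | PParent lam m a (q, j)}.encard
      ≤ ({j, j - 1} : Set ℕ).encard :=
        Set.encard_le_encard_of_injOn
          (fun a ha => (level a ha).elim Or.inl fun h =>
            Or.inr (Set.mem_singleton_iff.2 (by omega)))
          (fun a ha b hb => ha.eq_of_snd_eq hb)
    _ ≤ 2 := (Set.encard_insert_le _ _).trans (by norm_num)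

/-- In the successor forest of a temporal path, every node `(q, j)` has at most two
children: at most one child of the form `(·, j)`, at most one of the form `(·, j−1)`,
hence at most `2` children overall. -/
theorem pParent_at_most_two_children (lam : ℕ → Set ℤ) (m : ℕ) (q : ℤ) (j : ℕ)
    (hq : q ∈ lam j) (hj : j < m) :
    (∀ a b : ℤ × ℕ, PParent lam m a (q, j) → PParent lam m b (q, j) →
        a.2 = b.2 → a = b) ∧
      (∀ a : ℤ × ℕ, PParent lam m a (q, j) → a.2 = j ∨ a.2 + 1 = j) ∧
      {a : ℤ × ℕ | PParent lam m a (q, j)}.encard ≤ 2 :=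
  pParent_at_most_two_children_general lam m q j
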